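/- For every integer s ≥ 1, the variety C_2(Γ) = {(x, y) ∈ Γ × Γ : xy = yx} has dimension at least 7s². -/

import Mathlib

open MvPolynomial Matrix TopologicalSpace

/-- The Zariski topology on `r`-tuples of `n × n` matrices over `k`, identified with
affine space `k^(r·n²)`: the topology generated by complements of hypersurfaces
(its closed sets are exactly the common zero loci of families of polynomials in the
matrix entries). -/
noncomputable def matTupleZariski (k : Type*) [CommRing k] (n r : ℕ) :
    TopologicalSpace (Fin r → Matrix (Fin n) (Fin n) k) :=
  TopologicalSpace.generateFrom
    {U | ∃ p : MvPolynomial (Fin r × Fin n × Fin n) k,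
      U = {x | MvPolynomial.eval (fun q => x q.1 q.2.1 q.2.2) p ≠ 0}}

/-- `Γ`: the set of `4s × 4s` matrices which, in `4 × 4` block form with `s × s` blocks,
have block `A₁` in positions `(1,2)` and `(2,4)`, `A₂` in position `(1,3)`, `A₃` in
position `(1,4)`, `A₄` in position `(3,4)` (1-indexed blocks), and zero blocks elsewhere.
Block `(a, i)` of `Fin (4*s)` is realized via `finProdFinEquiv (a, i) = i + s·a`. -/
def Gamma (k : Type*) [Field k] (s : ℕ) : Set (Matrix (Fin (4 * s)) (Fin (4 * s)) k) :=
  {X | ∃ A₁ A₂ A₃ A₄ : Matrix (Fin s) (Fin s) k, ∀ (a b : Fin 4) (i j : Fin s),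
    X (finProdFinEquiv (a, i)) (finProdFinEquiv (b, j)) =
      if a = 0 ∧ b = 1 then A₁ i j
      else if a = 1 ∧ b = 3 then A₁ i j
      else if a = 0 ∧ b = 2 then A₂ i j
      else if a = 0 ∧ b = 3 then A₃ i j
      else if a = 2 ∧ b = 3 then A₄ i j
      else 0}

/-!
Write `x = Γ(A₁, A₂, A₃, A₄)` and `y = Γ(B₁, B₂, B₃, B₄)`. Both products `xy` and `yx` live in
the corner block `(1,4)`, so `x` and `y` commute iff `A₁B₁ + A₂B₄ = B₁A₁ + B₂A₄`. For any
`A₁, A₂, A₃, A₄, B₃, C, D` this is solved by `B₁ = det A₄ • C`, `B₄ = det A₄ • D` and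
`B₂ = (A₁C + A₂D - CA₁) adj A₄`, since `adj A₄ A₄ = det A₄ • 1`. This polynomial map from
`k^{7s²}` to `C₂(Γ)` is triangular: after ordering the parameters lexicographically with the
block `A₄` first, each parameter `p` appears in one entry of the pair as `p` or `det A₄ * p`.
Pushing the chain of coordinate subspaces of `k^{7s²}` forward and taking closures gives a
chain of irreducible closed subsets of length `7s²`, strict because the entry of the pair
belonging to a new parameter vanishes on the previous member of the chain but not on the next.
-/

open Set Topology

theorem le_topologicalKrullDim_of_chain {Y : Type*} [TopologicalSpace Y] {m : ℕ}
    {T : Fin (m + 1) → Set Y} (hT : Monotone T) (hirr : ∀ j, IsIrreducible (T j))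
    {H : Fin m → Set Y} (hH : ∀ j, IsClosed (H j)) (hsub : ∀ j, T j.castSucc ⊆ H j)
    (hnot : ∀ j, ¬T j.succ ⊆ H j) : (m : WithBot ℕ∞) ≤ topologicalKrullDim Y := by
  let Z : Fin (m + 1) → IrreducibleCloseds Y :=
    fun j => ⟨closure (T j), (hirr j).closure, isClosed_closure⟩
  have hZ : StrictMono Z := Fin.strictMono_iff_lt_succ.mpr fun j => by
    refine lt_of_le_of_ne (closure_mono (hT j.castSucc_le_succ)) fun h => hnot j ?_
    calc T j.succ ⊆ closure (T j.succ) := subset_closure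
      _ = closure (T j.castSucc) := congrArg IrreducibleCloseds.carrier h.symm
      _ ⊆ H j := closure_minimal (hsub j) (hH j)
  exact Order.LTSeries.length_le_krullDim (LTSeries.mk m Z hZ)

abbrev affineZariski (σ k : Type*) [CommRing k] : TopologicalSpace (σ → k) :=
  generateFrom (range fun p : MvPolynomial σ k => {x | eval x p ≠ 0})

namespace affineZariski

attribute [local instance] affineZariski

variable {σ τ k : Type*} [CommRing k]

theorem isOpen_setOf_eval_ne_zero (p : MvPolynomial σ k) : IsOpen {x : σ → k | eval x p ≠ 0} :=
  isOpen_generateFrom_of_mem ⟨p, rfl⟩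

theorem isClosed_setOf_eval_eq_zero (p : MvPolynomial σ k) :
    IsClosed {x : σ → k | eval x p = 0} := by
  simpa [← isOpen_compl_iff, compl_ofPred] using isOpen_setOf_eval_ne_zero p

theorem continuous_of_eval {f : (σ → k) → τ → k} (P : τ → MvPolynomial σ k)
    (hf : ∀ x c, f x c = eval x (P c)) : Continuous f := by
  refine continuous_generateFrom_iff.mpr ?_
  rintro _ ⟨p, rfl⟩
  have hbind (x : σ → k) : eval (f x) p = eval x (bind₁ P p) := by
    rw [show f x = fun c => eval x (P c) from funext (hf x)]
    exact (eval₂Hom_bind₁ _ _ _ _).symm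
  simpa only [preimage_ofPred_eq, hbind] using isOpen_setOf_eval_ne_zero (bind₁ P p)

theorem isTopologicalBasis [IsDomain k] :
    IsTopologicalBasis (range fun p : MvPolynomial σ k => {x | eval x p ≠ 0}) := by
  have hbasis := isTopologicalBasis_of_subbasis_of_inter (t := affineZariski σ k) rfl (by
    rintro _ ⟨p, rfl⟩ _ ⟨q, rfl⟩
    exact ⟨p * q, by ext x; simp⟩)
  have huniv : univ ∈ range fun p : MvPolynomial σ k => {x | eval x p ≠ 0} :=
    ⟨1, by ext; simp⟩
  rwa [insert_eq_of_mem huniv] at hbasis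

theorem isIrreducible_univ [IsDomain k] [Infinite k] : IsIrreducible (univ : Set (σ → k)) := by
  refine ⟨univ_nonempty, ?_⟩
  rintro u v hu hv ⟨x, -, hxu⟩ ⟨y, -, hyv⟩
  obtain ⟨_, ⟨p, rfl⟩, hxp, hpu⟩ := isTopologicalBasis.exists_subset_of_mem_open hxu hu
  obtain ⟨_, ⟨q, rfl⟩, hyq, hqv⟩ := isTopologicalBasis.exists_subset_of_mem_open hyv hv
  have hpq : p * q ≠ 0 := mul_ne_zero (by rintro rfl; simp at hxp) (by rintro rfl; simp at hyq)
  obtain ⟨z, hz⟩ : ∃ z, eval z (p * q) ≠ 0 := by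
    by_contra! h
    exact hpq (MvPolynomial.funext fun z => by simpa using h z)
  rw [map_mul] at hz
  exact ⟨z, trivial, hpu (left_ne_zero_of_mul hz), hqv (right_ne_zero_of_mul hz)⟩

theorem isIrreducible_setOf_forall_mem_eq_zero [IsDomain k] [Infinite k] (A : Set σ) :
    IsIrreducible {x : σ → k | ∀ c ∈ A, x c = 0} := by
  classical
  have hrange : {x : σ → k | ∀ c ∈ A, x c = 0} =
      range fun (x : σ → k) c => if c ∈ A then 0 else x c := by
    ext x
    refine ⟨fun hx => ⟨x, funext fun c => ?_⟩, ?_⟩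
    · by_cases hc : c ∈ A <;> simp [hc, hx c]
    · rintro ⟨y, rfl⟩ c hc
      simp [hc]
  rw [hrange, ← image_univ]
  refine isIrreducible_univ.image _ (Continuous.continuousOn ?_)
  exact continuous_of_eval (fun c => if c ∈ A then 0 else X c) fun x c => by split_ifs <;> simp

/-- The closures of the images of the coordinate subspaces `{x | ∀ c' ≥ c, x c' = 0}` form a
strict chain: `H c` separates consecutive members. -/
theorem card_le_topologicalKrullDim_of_triangular [IsDomain k] [Infinite k] [Fintype σ]
    [LinearOrder σ] {Y : Type*} [TopologicalSpace Y] {f : (σ → k) → Y} (hf : Continuous f)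
    (H : σ → Set Y) (hH : ∀ c, IsClosed (H c))
    (hmaps : ∀ c x, (∀ c', c ≤ c' → x c' = 0) → f x ∈ H c)
    (hwit : ∀ c, ∃ x, (∀ c', c < c' → x c' = 0) ∧ f x ∉ H c) :
    (Fintype.card σ : WithBot ℕ∞) ≤ topologicalKrullDim Y := by
  let e := Fintype.orderIsoFinOfCardEq σ rfl
  let L : Fin (Fintype.card σ + 1) → Set (σ → k) :=
    fun j => {x | ∀ c ∈ {c | j ≤ (e.symm c).castSucc}, x c = 0}
  refine le_topologicalKrullDim_of_chain (T := fun j => f '' L j) (H := fun j => H (e j))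
    (fun j j' hjj' => image_mono fun x hx c hc => hx c (hjj'.trans hc))
    (fun j => (isIrreducible_setOf_forall_mem_eq_zero _).image f hf.continuousOn)
    (fun j => hH _) ?_ ?_
  · rintro j _ ⟨x, hx, rfl⟩
    exact hmaps _ _ fun c hc => hx c (by simpa [e.le_symm_apply] using hc)
  · intro j h
    obtain ⟨x, hx, hfx⟩ := hwit (e j)
    exact hfx (h ⟨x, fun c hc => hx c (by simpa [e.lt_symm_apply] using hc), rfl⟩)

end affineZariski

open affineZariski

attribute [local instance] affineZariski

theorem matTupleZariski_eq_induced (k : Type*) [CommRing k] (n r : ℕ) :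
    matTupleZariski k n r =
      (affineZariski (Fin r × Fin n × Fin n) k).induced fun x q => x q.1 q.2.1 q.2.2 := by
  rw [affineZariski, induced_generateFrom_eq, matTupleZariski]
  congr 1
  ext U
  simp [eq_comm]

theorem isClosed_setOf_apply_eq_zero {k : Type*} [CommRing k] {n r : ℕ} (m : Fin r)
    (p q : Fin n) : IsClosed[matTupleZariski k n r] {y | y m p q = 0} := by
  rw [matTupleZariski_eq_induced, isClosed_induced_iff]
  exact ⟨_, isClosed_setOf_eval_eq_zero (X (m, p, q)), by ext; simp⟩

section Blocks

variable {R : Type*} [CommRing R] {s : ℕ}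

def gammaBlocks (A₁ A₂ A₃ A₄ : Matrix (Fin s) (Fin s) R) :
    Matrix (Fin 4 × Fin s) (Fin 4 × Fin s) R :=
  fun p q =>
    if p.1 = 0 ∧ q.1 = 1 then A₁ p.2 q.2
    else if p.1 = 1 ∧ q.1 = 3 then A₁ p.2 q.2
    else if p.1 = 0 ∧ q.1 = 2 then A₂ p.2 q.2
    else if p.1 = 0 ∧ q.1 = 3 then A₃ p.2 q.2
    else if p.1 = 2 ∧ q.1 = 3 then A₄ p.2 q.2
    else 0

def cornerBlock (M : Matrix (Fin s) (Fin s) R) : Matrix (Fin 4 × Fin s) (Fin 4 × Fin s) R :=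
  fun p q => if p.1 = 0 ∧ q.1 = 3 then M p.2 q.2 else 0

theorem gammaBlocks_mul_gammaBlocks (A₁ A₂ A₃ A₄ B₁ B₂ B₃ B₄ : Matrix (Fin s) (Fin s) R) :
    gammaBlocks A₁ A₂ A₃ A₄ * gammaBlocks B₁ B₂ B₃ B₄ = cornerBlock (A₁ * B₁ + A₂ * B₄) := by
  ext ⟨a, i⟩ ⟨b, j⟩
  rw [Matrix.mul_apply, Fintype.sum_prod_type, Fin.sum_univ_four]
  fin_cases a <;> fin_cases b <;> simp [gammaBlocks, cornerBlock, Matrix.mul_apply]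

def gammaMatrix (A₁ A₂ A₃ A₄ : Matrix (Fin s) (Fin s) R) : Matrix (Fin (4 * s)) (Fin (4 * s)) R :=
  reindex finProdFinEquiv finProdFinEquiv (gammaBlocks A₁ A₂ A₃ A₄)

theorem gammaMatrix_apply (A₁ A₂ A₃ A₄ : Matrix (Fin s) (Fin s) R) (a b : Fin 4) (i j : Fin s) :
    gammaMatrix A₁ A₂ A₃ A₄ (finProdFinEquiv (a, i)) (finProdFinEquiv (b, j)) =
      gammaBlocks A₁ A₂ A₃ A₄ (a, i) (b, j) := by
  simp [gammaMatrix]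

theorem gammaMatrix_mem_Gamma {k : Type*} [Field k] (A₁ A₂ A₃ A₄ : Matrix (Fin s) (Fin s) k) :
    gammaMatrix A₁ A₂ A₃ A₄ ∈ Gamma k s :=
  ⟨A₁, A₂, A₃, A₄, gammaMatrix_apply A₁ A₂ A₃ A₄⟩

theorem gammaMatrix_map {S : Type*} [CommRing S] (f : R →+* S)
    (A₁ A₂ A₃ A₄ : Matrix (Fin s) (Fin s) R) :
    (gammaMatrix A₁ A₂ A₃ A₄).map f =
      gammaMatrix (A₁.map f) (A₂.map f) (A₃.map f) (A₄.map f) := by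
  ext p q
  simp only [gammaMatrix, gammaBlocks, reindex_apply, map_apply, submatrix_apply]
  split_ifs <;> simp

theorem commute_gammaMatrix {A₁ A₂ A₃ A₄ B₁ B₂ B₃ B₄ : Matrix (Fin s) (Fin s) R}
    (h : A₁ * B₁ + A₂ * B₄ = B₁ * A₁ + B₂ * A₄) :
    Commute (gammaMatrix A₁ A₂ A₃ A₄) (gammaMatrix B₁ B₂ B₃ B₄) := by
  simp only [Commute, SemiconjBy, gammaMatrix, reindex_apply, submatrix_mul_equiv,
    gammaBlocks_mul_gammaBlocks, h]

/-- With `P = ![A₄, A₁, A₂, A₃, B₃, C, D]`. -/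
def commutingPair (P : Fin 7 → Matrix (Fin s) (Fin s) R) :
    Fin 2 → Matrix (Fin (4 * s)) (Fin (4 * s)) R :=
  ![gammaMatrix (P 1) (P 2) (P 3) (P 0),
    gammaMatrix ((P 0).det • P 5) ((P 1 * P 5 + P 2 * P 6 - P 5 * P 1) * (P 0).adjugate) (P 4)
      ((P 0).det • P 6)]

theorem commute_commutingPair (P : Fin 7 → Matrix (Fin s) (Fin s) R) :
    Commute (commutingPair P 0) (commutingPair P 1) := by
  refine commute_gammaMatrix ?_
  simp only [Matrix.mul_assoc, adjugate_mul, Matrix.mul_smul, Matrix.smul_mul, Matrix.mul_one,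
    smul_sub, smul_add]
  abel

theorem commutingPair_map {S : Type*} [CommRing S] (f : R →+* S)
    (P : Fin 7 → Matrix (Fin s) (Fin s) R) (m : Fin 2) :
    (commutingPair P m).map f = commutingPair (fun t => (P t).map f) m := by
  have hadj (M : Matrix (Fin s) (Fin s) R) : M.adjugate.map f = (M.map f).adjugate :=
    RingHom.map_adjugate f M
  fin_cases m <;>
    simp [commutingPair, gammaMatrix_map, Matrix.map_mul, Matrix.map_sub, Matrix.map_add,
      RingHom.map_det, hadj, Matrix.map_smul' f _ _ (map_mul f)]

/-- The entry `(matrix, block row, block column)` of `commutingPair P` in which `P t` appears,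
multiplied by `det (P 0)` when `t = 5, 6`. -/
def probe : Fin 7 → Fin 2 × Fin 4 × Fin 4 :=
  ![(0, 2, 3), (0, 0, 1), (0, 0, 2), (0, 0, 3), (1, 0, 3), (1, 0, 1), (1, 2, 3)]

theorem commutingPair_probe (P : Fin 7 → Matrix (Fin s) (Fin s) R) (t : Fin 7) (i j : Fin s) :
    commutingPair P (probe t).1 (finProdFinEquiv ((probe t).2.1, i))
        (finProdFinEquiv ((probe t).2.2, j)) =
      (if 5 ≤ t then (P 0).det else 1) * P t i j := by
  fin_cases t <;> simp [commutingPair, probe, gammaMatrix_apply, gammaBlocks]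

end Blocks

section Parametrization

variable {k : Type*} {s : ℕ}

def paramBlocks {R : Type*} (x : Fin 7 ×ₗ Fin s ×ₗ Fin s → R) :
    Fin 7 → Matrix (Fin s) (Fin s) R :=
  fun t => Matrix.of fun i j => x (toLex (t, toLex (i, j)))

def ofBlocks {R : Type*} (P : Fin 7 → Matrix (Fin s) (Fin s) R) : Fin 7 ×ₗ Fin s ×ₗ Fin s → R :=
  fun c => P (ofLex c).1 (ofLex (ofLex c).2).1 (ofLex (ofLex c).2).2

theorem paramBlocks_ofBlocks {R : Type*} (P : Fin 7 → Matrix (Fin s) (Fin s) R) :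
    paramBlocks (ofBlocks P) = P :=
  rfl

theorem commutingPair_mem_Gamma [Field k] (P : Fin 7 → Matrix (Fin s) (Fin s) k) (m : Fin 2) :
    commutingPair P m ∈ Gamma k s := by
  fin_cases m <;> exact gammaMatrix_mem_Gamma _ _ _ _

theorem continuous_commutingPair_paramBlocks [CommRing k] :
    Continuous[_, matTupleZariski k (4 * s) 2]
      fun x : Fin 7 ×ₗ Fin s ×ₗ Fin s → k => commutingPair (paramBlocks x) := by
  rw [matTupleZariski_eq_induced]
  refine continuous_induced_rng.mpr
    (continuous_of_eval (fun q => commutingPair (paramBlocks X) q.1 q.2.1 q.2.2) fun x q => ?_)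
  have hX : (fun t => (paramBlocks X t).map (eval x)) = paramBlocks x := by
    ext t i j
    simp [paramBlocks]
  change commutingPair (paramBlocks x) q.1 q.2.1 q.2.2 = _
  rw [← hX, ← commutingPair_map]
  rfl

def probeEntry [CommRing k] (y : Fin 2 → Matrix (Fin (4 * s)) (Fin (4 * s)) k)
    (c : Fin 7 ×ₗ Fin s ×ₗ Fin s) : k :=
  y (probe (ofLex c).1).1 (finProdFinEquiv ((probe (ofLex c).1).2.1, (ofLex (ofLex c).2).1))
    (finProdFinEquiv ((probe (ofLex c).1).2.2, (ofLex (ofLex c).2).2))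

theorem probeEntry_commutingPair [CommRing k] (x : Fin 7 ×ₗ Fin s ×ₗ Fin s → k)
    (c : Fin 7 ×ₗ Fin s ×ₗ Fin s) :
    probeEntry (commutingPair (paramBlocks x)) c =
      (if 5 ≤ (ofLex c).1 then (paramBlocks x 0).det else 1) * x c :=
  commutingPair_probe _ _ _ _

/-- The block `P 0 = A₄` precedes the blocks `P 5, P 6` in the lexicographic order, so the
witness for a coordinate of `P 5` or `P 6` may take `A₄ = 1`. -/
theorem exists_probeEntry_ne_zero [Field k] (t : Fin 7) (i j : Fin s) :
    ∃ x : Fin 7 ×ₗ Fin s ×ₗ Fin s → k, (∀ c, toLex (t, toLex (i, j)) < c → x c = 0) ∧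
      probeEntry (commutingPair (paramBlocks x)) (toLex (t, toLex (i, j))) ≠ 0 := by
  let W : Fin 7 → Matrix (Fin s) (Fin s) k :=
    Pi.single t (single i j 1) + if 5 ≤ t then Pi.single 0 1 else 0
  refine ⟨ofBlocks W, ?_, ?_⟩
  · rintro ⟨t', a, b⟩ hlt
    change toLex (t, toLex (i, j)) < toLex (t', toLex (a, b)) at hlt
    have hne : ¬(t = t' ∧ i = a ∧ j = b) := by
      rintro ⟨rfl, rfl, rfl⟩
      exact lt_irrefl _ hlt
    have hle : t ≤ t' := (Prod.Lex.toLex_lt_toLex'.mp hlt).1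
    have h0 : ¬(5 ≤ t ∧ t' = 0) := by
      rintro ⟨h5, rfl⟩
      exact absurd (h5.trans hle) (by decide)
    change W t' a b = 0
    simp only [W, Pi.add_apply, Pi.single_apply]
    split_ifs <;> simp_all
  · rw [probeEntry_commutingPair, paramBlocks_ofBlocks]
    change (if 5 ≤ t then _ else _) * W t i j ≠ 0
    split_ifs with h5
    · have ht0 : t ≠ 0 := by
        rintro rfl
        exact absurd h5 (by decide)
      simp [W, h5, ht0, ht0.symm]
    · simp [W, h5]

end Parametrization

theorem dim_commPairs_Gamma_ge_general (k : Type*) [Field k] [IsAlgClosed k]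
    (s : ℕ) :
    letI := matTupleZariski k (4 * s) 2
    ((7 * s ^ 2 : ℕ) : WithBot ℕ∞)
      ≤ topologicalKrullDim
          {x : Fin 2 → Matrix (Fin (4 * s)) (Fin (4 * s)) k |
            (∀ i, x i ∈ Gamma k s) ∧ x 0 * x 1 = x 1 * x 0} := by
  let := matTupleZariski k (4 * s) 2
  have hcard : Fintype.card (Fin 7 ×ₗ Fin s ×ₗ Fin s) = 7 * s ^ 2 := by
    simp [Fintype.card_lex, sq]
  rw [← hcard]
  exact card_le_topologicalKrullDim_of_triangular
    (f := fun x => ⟨commutingPair (paramBlocks x), commutingPair_mem_Gamma _,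
      commute_commutingPair _⟩)
    (continuous_commutingPair_paramBlocks.subtype_mk _) (fun c => {y | probeEntry y.1 c = 0})
    (fun c => (isClosed_setOf_apply_eq_zero _ _ _).preimage continuous_subtype_val)
    (fun c x hx => by simp [probeEntry_commutingPair, hx c le_rfl])
    fun c => exists_probeEntry_ne_zero (ofLex c).1 (ofLex (ofLex c).2).1 (ofLex (ofLex c).2).2

/-- For every integer `s ≥ 1`, the variety `C₂(Γ) = {(x, y) ∈ Γ × Γ : xy = yx}` has
dimension at least `7s²`. -/
theorem dim_commPairs_Gamma_ge (k : Type*) [Field k] [IsAlgClosed k]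
    (s : ℕ) (hs : 1 ≤ s) :
    letI := matTupleZariski k (4 * s) 2
    ((7 * s ^ 2 : ℕ) : WithBot ℕ∞)
      ≤ topologicalKrullDim
          {x : Fin 2 → Matrix (Fin (4 * s)) (Fin (4 * s)) k |
            (∀ i, x i ∈ Gamma k s) ∧ x 0 * x 1 = x 1 * x 0} :=
  dim_commPairs_Gamma_ge_general k s
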